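/- Let G be a finite non-cyclic group whose non-cyclic graph is regular (all vertices have equal degree), and let H = G/Cyc(G). Then for any two non-trivial elements x, y of H, either Cyc_H(x) ∩ Cyc_H(y) = 1, or Cyc_H(x) = Cyc_H(y) and Cyc_H(x) is a (cyclic) subgroup of H. -/
import Mathlib

/-- `Cyc(G)`. -/
def cycSet (G : Type*) [Group G] : Set G :=
  {y | ∀ x : G, IsCyclic ↥(Subgroup.closure ({x, y} : Set G))}

/-- `Cyc_G(x)`. -/
def cycOf {G : Type*} [Group G] (x : G) : Set G :=
  {y | IsCyclic ↥(Subgroup.closure ({x, y} : Set G))}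

section helpers

variable {G : Type*} [Group G]

lemma zpowers_isCyclic (v : G) : IsCyclic ↥(Subgroup.zpowers v) := by
  refine ⟨⟨v, Subgroup.mem_zpowers v⟩, fun x => ?_⟩
  obtain ⟨x, hx⟩ := x
  obtain ⟨k, hk⟩ := hx
  exact ⟨k, Subtype.ext (by simpa using hk)⟩

lemma isCyclic_of_le_zpowers {K : Subgroup G} {v : G} (h : K ≤ Subgroup.zpowers v) :
    IsCyclic ↥K :=
  haveI := zpowers_isCyclic v
  Subgroup.isCyclic_of_le h

lemma exists_le_zpowers {S : Subgroup G} (hS : IsCyclic ↥S) :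
    ∃ v : G, v ∈ S ∧ S ≤ Subgroup.zpowers v := by
  obtain ⟨g, hg⟩ := hS
  refine ⟨↑g, g.2, fun s hs => ?_⟩
  obtain ⟨k, hk⟩ := hg ⟨s, hs⟩
  exact ⟨k, by simpa using congrArg Subtype.val hk⟩

lemma mem_cycOf_iff {x z : G} :
    z ∈ cycOf x ↔ IsCyclic ↥(Subgroup.closure ({x, z} : Set G)) := Iff.rfl

lemma cycOf_comm {x z : G} (h : z ∈ cycOf x) : x ∈ cycOf z := by
  rwa [mem_cycOf_iff, Set.pair_comm]

lemma self_mem_cycOf (x : G) : x ∈ cycOf x := by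
  rw [mem_cycOf_iff, Set.pair_eq_singleton, ← Subgroup.zpowers_eq_closure]
  exact zpowers_isCyclic x

lemma one_mem_cycOf (x : G) : (1 : G) ∈ cycOf x := by
  rw [mem_cycOf_iff]
  refine isCyclic_of_le_zpowers (v := x) (Subgroup.closure_le _ |>.2 ?_)
  rintro y (rfl | rfl)
  · exact Subgroup.mem_zpowers _
  · exact Subgroup.one_mem _

lemma mem_cycOf_of_zpowers {x z v : G} (hx : x ∈ Subgroup.zpowers v)
    (hz : z ∈ Subgroup.zpowers v) : z ∈ cycOf x := by
  rw [mem_cycOf_iff]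
  refine isCyclic_of_le_zpowers (v := v) (Subgroup.closure_le _ |>.2 ?_)
  rintro y (rfl | rfl) <;> assumption

lemma cycOf_anti {x w : G} (h : x ∈ Subgroup.zpowers w) : cycOf w ⊆ cycOf x := by
  intro u hu
  rw [mem_cycOf_iff] at hu ⊢
  obtain ⟨v, -, hv⟩ := exists_le_zpowers hu
  refine isCyclic_of_le_zpowers (v := v) (Subgroup.closure_le _ |>.2 ?_)
  have hw : w ∈ Subgroup.zpowers v := hv (Subgroup.subset_closure (by simp))
  have hu' : u ∈ Subgroup.zpowers v := hv (Subgroup.subset_closure (by simp))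
  rintro y (rfl | rfl)
  · obtain ⟨k, hk⟩ := h
    exact hk ▸ Subgroup.zpow_mem _ hw k
  · exact hu'

end helpers

section main

variable {H : Type*} [Group H] [Finite H]

/-- Key lemma: with regular cyclicizers, nontrivial `z ∈ cycOf x` forces equality. -/
lemma cycOf_eq_of_mem (hreg : ∀ x y : H, x ≠ 1 → y ≠ 1 → (cycOf x).ncard = (cycOf y).ncard)
    {x z : H} (hx : x ≠ 1) (hz : z ≠ 1) (h : z ∈ cycOf x) : cycOf x = cycOf z := by
  rw [mem_cycOf_iff] at h
  obtain ⟨w, -, hw⟩ := exists_le_zpowers h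
  have hxw : x ∈ Subgroup.zpowers w := hw (Subgroup.subset_closure (by simp))
  have hzw : z ∈ Subgroup.zpowers w := hw (Subgroup.subset_closure (by simp))
  have hwne : w ≠ 1 := by
    rintro rfl
    obtain ⟨k, hk⟩ := hxw
    exact hx (by simpa using hk.symm)
  have h1 : cycOf w = cycOf x :=
    Set.eq_of_subset_of_ncard_le (cycOf_anti hxw)
      (hreg x w hx hwne).le (Set.toFinite _)
  have h2 : cycOf w = cycOf z :=
    Set.eq_of_subset_of_ncard_le (cycOf_anti hzw)
      (hreg z w hz hwne).le (Set.toFinite _)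
  rw [← h1, h2]

lemma cycOf_subgroup (hreg : ∀ x y : H, x ≠ 1 → y ≠ 1 → (cycOf x).ncard = (cycOf y).ncard)
    {x : H} (hx : x ≠ 1) : ∃ K : Subgroup H, (K : Set H) = cycOf x := by
  have hinv : ∀ a : H, a ∈ cycOf x → a⁻¹ ∈ cycOf x := by
    intro a ha
    rw [mem_cycOf_iff] at ha ⊢
    obtain ⟨v, -, hv⟩ := exists_le_zpowers ha
    refine isCyclic_of_le_zpowers (v := v) (Subgroup.closure_le _ |>.2 ?_)
    have hxa : x ∈ Subgroup.zpowers v := hv (Subgroup.subset_closure (by simp))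
    have haa : a ∈ Subgroup.zpowers v := hv (Subgroup.subset_closure (by simp))
    rintro y (rfl | rfl)
    · exact hxa
    · exact Subgroup.inv_mem _ haa
  have hmul : ∀ a b : H, a ∈ cycOf x → b ∈ cycOf x → a * b ∈ cycOf x := by
    intro a b ha hb
    by_cases ha1 : a = 1
    · simpa [ha1] using hb
    by_cases hb1 : b = 1
    · simpa [hb1] using ha
    -- cycOf a = cycOf x = cycOf b
    have hax : cycOf x = cycOf a := cycOf_eq_of_mem hreg hx ha1 ha
    have hbx : cycOf x = cycOf b := cycOf_eq_of_mem hreg hx hb1 hb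
    have hba : b ∈ cycOf a := by rw [← hax, hbx]; exact self_mem_cycOf b
    rw [mem_cycOf_iff] at hba
    obtain ⟨w, -, hw⟩ := exists_le_zpowers hba
    have haw : a ∈ Subgroup.zpowers w := hw (Subgroup.subset_closure (by simp))
    have hbw : b ∈ Subgroup.zpowers w := hw (Subgroup.subset_closure (by simp))
    have hwne : w ≠ 1 := by
      rintro rfl
      obtain ⟨k, hk⟩ := haw
      exact ha1 (by simpa using hk.symm)
    -- w ∈ cycOf a, so cycOf w = cycOf a = cycOf x, so x ∈ cycOf w
    have hwa : w ∈ cycOf a := mem_cycOf_of_zpowers haw (Subgroup.mem_zpowers w)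
    have h1 : cycOf a = cycOf w := cycOf_eq_of_mem hreg ha1 hwne hwa
    have hxw : x ∈ cycOf w := by
      rw [← h1, ← hax]; exact self_mem_cycOf x
    -- closure {w, x} cyclic, and a*b ∈ zpowers w ≤ closure {w,x}
    rw [mem_cycOf_iff] at hxw ⊢
    obtain ⟨v, -, hv⟩ := exists_le_zpowers hxw
    have hwv : w ∈ Subgroup.zpowers v := hv (Subgroup.subset_closure (by simp))
    have hxv : x ∈ Subgroup.zpowers v := hv (Subgroup.subset_closure (by simp))
    refine isCyclic_of_le_zpowers (v := v) (Subgroup.closure_le _ |>.2 ?_)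
    rintro y (rfl | rfl)
    · exact hxv
    · exact (Subgroup.zpowers_le.mpr hwv : Subgroup.zpowers w ≤ _)
        (Subgroup.mul_mem _ haw hbw)
  exact ⟨{ carrier := cycOf x
           one_mem' := one_mem_cycOf x
           mul_mem' := fun ha hb => hmul _ _ ha hb
           inv_mem' := fun ha => hinv _ ha }, rfl⟩

end main

section transfer

variable {G : Type*} [Group G] [Fintype G] (N : Subgroup G) [N.Normal]

open QuotientGroup

lemma cycOf_quot_iff (hN : (N : Set G) = cycSet G) {x z : G} :
    z ∈ cycOf x ↔ ((z : G ⧸ N) ∈ cycOf (x : G ⧸ N)) := by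
  constructor
  · intro h
    rw [mem_cycOf_iff] at h ⊢
    have : (Subgroup.closure ({x, z} : Set G)).map (QuotientGroup.mk' N) =
        Subgroup.closure ({(x : G ⧸ N), (z : G ⧸ N)} : Set (G ⧸ N)) := by
      rw [MonoidHom.map_closure, Set.image_pair]
      rfl
    rw [← this]
    exact isCyclic_of_surjective _ ((QuotientGroup.mk' N).subgroupMap_surjective _)
  · intro h
    rw [mem_cycOf_iff] at h ⊢
    obtain ⟨wb, -, hw⟩ := exists_le_zpowers h
    obtain ⟨w, rfl⟩ := QuotientGroup.mk_surjective wb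
    have hx : (x : G ⧸ N) ∈ Subgroup.zpowers ((w : G ⧸ N)) :=
      hw (Subgroup.subset_closure (by simp))
    have hz : (z : G ⧸ N) ∈ Subgroup.zpowers ((w : G ⧸ N)) :=
      hw (Subgroup.subset_closure (by simp))
    obtain ⟨a, ha⟩ := hx
    obtain ⟨b, hb⟩ := hz
    have hn1 : (w ^ a)⁻¹ * x ∈ N := by
      rw [← QuotientGroup.eq]
      simpa using ha
    have hn2 : (w ^ b)⁻¹ * z ∈ N := by
      rw [← QuotientGroup.eq]
      simpa using hb
    set n₁ := (w ^ a)⁻¹ * x with hdef1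
    set n₂ := (w ^ b)⁻¹ * z with hdef2
    have hc1 : IsCyclic ↥(Subgroup.closure ({w, n₁} : Set G)) := by
      have h1 : n₁ ∈ cycSet G := hN ▸ (show n₁ ∈ (N : Set G) from hn1)
      exact h1 w
    obtain ⟨u, -, hu⟩ := exists_le_zpowers hc1
    have hwu : w ∈ Subgroup.zpowers u := hu (Subgroup.subset_closure (by simp))
    have hn1u : n₁ ∈ Subgroup.zpowers u := hu (Subgroup.subset_closure (by simp))
    have hc2 : IsCyclic ↥(Subgroup.closure ({u, n₂} : Set G)) := by
      have h2 : n₂ ∈ cycSet G := hN ▸ (show n₂ ∈ (N : Set G) from hn2)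
      exact h2 u
    obtain ⟨v, -, hv⟩ := exists_le_zpowers hc2
    have huv : Subgroup.zpowers u ≤ Subgroup.zpowers v :=
      Subgroup.zpowers_le.mpr (hv (Subgroup.subset_closure (by simp)))
    have hn2v : n₂ ∈ Subgroup.zpowers v := hv (Subgroup.subset_closure (by simp))
    have hwv : w ∈ Subgroup.zpowers v := huv hwu
    have hxv : x ∈ Subgroup.zpowers v := by
      have : x = w ^ a * n₁ := by rw [hdef1]; group
      rw [this]
      exact Subgroup.mul_mem _ (Subgroup.zpow_mem _ hwv a) (huv hn1u)
    have hzv : z ∈ Subgroup.zpowers v := by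
      have : z = w ^ b * n₂ := by rw [hdef2]; group
      rw [this]
      exact Subgroup.mul_mem _ (Subgroup.zpow_mem _ hwv b) hn2v
    refine isCyclic_of_le_zpowers (v := v) (Subgroup.closure_le _ |>.2 ?_)
    rintro y (rfl | rfl) <;> assumption

lemma cycOf_preimage (hN : (N : Set G) = cycSet G) {x : G} :
    (QuotientGroup.mk ⁻¹' (cycOf (x : G ⧸ N)) : Set G) = cycOf x := by
  ext z
  exact (cycOf_quot_iff N hN).symm

lemma hreg_quot (hN : (N : Set G) = cycSet G) (hreg : ∀ x y : G, x ∉ cycSet G → y ∉ cycSet G →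
      (cycOf x).ncard = (cycOf y).ncard) :
    ∀ x y : G ⧸ N, x ≠ 1 → y ≠ 1 → (cycOf x).ncard = (cycOf y).ncard := by
  intro x y hx hy
  obtain ⟨a, rfl⟩ := QuotientGroup.mk_surjective x
  obtain ⟨b, rfl⟩ := QuotientGroup.mk_surjective y
  have haN : a ∉ cycSet G := by
    rw [← hN]
    intro h
    exact hx ((QuotientGroup.eq_one_iff a).2 h)
  have hbN : b ∉ cycSet G := by
    rw [← hN]
    intro h
    exact hy ((QuotientGroup.eq_one_iff b).2 h)
  have key : ∀ c : G, (cycOf c).ncard =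
      Nat.card N * (cycOf (c : G ⧸ N)).ncard := by
    intro c
    rw [← cycOf_preimage N hN (x := c), ← Nat.card_coe_set_eq,
      ← Nat.card_coe_set_eq,
      Nat.card_congr (QuotientGroup.preimageMkEquivSubgroupProdSet N _), Nat.card_prod]
  have h := hreg a b haN hbN
  rw [key a, key b] at h
  exact Nat.eq_of_mul_eq_mul_left Nat.card_pos h

end transfer

/-- Let `G` be a finite non-cyclic group with regular non-cyclic graph and
`H = G/Cyc(G)`. Then for non-trivial `x, y ∈ H`, either
`Cyc_H(x) ∩ Cyc_H(y) = 1`, or `Cyc_H(x) = Cyc_H(y)` is a subgroup of `H`. -/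
theorem cyclicizers_in_quotient_of_regular {G : Type*} [Group G] [Fintype G]
    (hG : ¬ IsCyclic G)
    (hreg : ∀ x y : G, x ∉ cycSet G → y ∉ cycSet G →
      (cycOf x).ncard = (cycOf y).ncard)
    (N : Subgroup G) [N.Normal] (hN : (N : Set G) = cycSet G) :
    ∀ x y : G ⧸ N, x ≠ 1 → y ≠ 1 →
      (cycOf x ∩ cycOf y = ({1} : Set (G ⧸ N))) ∨
      (cycOf x = cycOf y ∧ ∃ K : Subgroup (G ⧸ N), (K : Set (G ⧸ N)) = cycOf x) := by
  intro x y hx hy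
  have hreg' := hreg_quot N hN hreg
  by_cases hint : cycOf x ∩ cycOf y = ({1} : Set (G ⧸ N))
  · exact Or.inl hint
  · refine Or.inr ⟨?_, cycOf_subgroup hreg' hx⟩
    have hsub : ({1} : Set (G ⧸ N)) ⊆ cycOf x ∩ cycOf y := by
      rintro z rfl
      exact ⟨one_mem_cycOf x, one_mem_cycOf y⟩
    obtain ⟨z, hzmem, hz1⟩ : ∃ z, z ∈ cycOf x ∩ cycOf y ∧ z ∉ ({1} : Set (G ⧸ N)) := by
      by_contra h
      push_neg at h
      exact hint (Set.Subset.antisymm (fun z hz => h z hz) hsub)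
    have hz : z ≠ 1 := by simpa using hz1
    rw [cycOf_eq_of_mem hreg' hx hz hzmem.1, cycOf_eq_of_mem hreg' hy hz hzmem.2]
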